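/- arXiv:1612.00680 — 3 statements merged into one kernel-verified Lean document; each statement's English description precedes it below -/
import Mathlib

section
/- Let λ > 0, σ ∈ ℝ, and let ω ∈ C₀(ℝ,ℝ) satisfy the sublinear growth condition lim_{|t|→∞} ω(t)/t = 0 (law of the iterated logarithm regime). Define R(ω) = sup_{t≥0} exp(−(λ + σ²/2)t + σ·ω(t)). Then for every γ > 0, sup_{τ∈ℝ} e^{−γ|τ|} R(θ_τ ω) < ∞, where θ_τ ω(t) = ω(t+τ) − ω(τ); i.e. R is tempered along this trajectory. -/
/-!
Sublinear growth of a continuous path gives, for every `ε > 0`, a bound `|ω s| ≤ C + ε |s|`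
on all of `ℝ`. Taking `|σ| ε` small against both the drift `λ + σ²/2` and `γ`, the exponent
`-(λ + σ²/2) t + σ (ω (t + τ) - ω τ)` is at most `γ |τ| + 2 |σ| C` uniformly in `t ≥ 0`,
which the weight `e^{-γ|τ|}` absorbs.
-/

open Real Filter Asymptotics

theorem Asymptotics.IsLittleO.exists_norm_le_add_mul_norm {X E F : Type*} [TopologicalSpace X]
    [SeminormedAddGroup E] [SeminormedAddGroup F] {f : X → E} {g : X → F} (hf : Continuous f)
    (hfg : f =o[cocompact X] g) {ε : ℝ} (hε : 0 < ε) :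
    ∃ C, ∀ x, ‖f x‖ ≤ C + ε * ‖g x‖ := by
  obtain ⟨K, hK, hfK⟩ := hasBasis_cocompact.eventually_iff.mp (hfg.def hε)
  obtain ⟨C, hC⟩ := hK.exists_bound_of_continuousOn hf.continuousOn
  refine ⟨max C 0, fun x => ?_⟩
  by_cases hx : x ∈ K
  · have : 0 ≤ ε * ‖g x‖ := by positivity
    linarith [hC x hx, le_max_left C 0]
  · linarith [hfK hx, le_max_right C 0]

theorem isLittleO_cocompact_id_of_tendsto_div {ω : ℝ → ℝ}
    (htop : Tendsto (fun t => ω t / t) atTop (nhds 0))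
    (hbot : Tendsto (fun t => ω t / t) atBot (nhds 0)) :
    ω =o[cocompact ℝ] id := by
  rw [cocompact_eq_atBot_atTop]
  refine .sup ((isLittleO_iff_tendsto' ?_).mpr hbot) ((isLittleO_iff_tendsto' ?_).mpr htop)
  · exact (eventually_lt_atBot 0).mono fun t ht h => absurd h ht.ne
  · exact (eventually_gt_atTop 0).mono fun t ht h => absurd h ht.ne'

theorem exists_shifted_exponent_le {β σ γ : ℝ} {ω : ℝ → ℝ} (hβ : 0 < β) (hγ : 0 < γ)
    (hω : Continuous ω) (hωo : ω =o[cocompact ℝ] id) :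
    ∃ C, ∀ τ t, 0 ≤ t → -β * t + σ * (ω (t + τ) - ω τ) ≤ γ * |τ| + C := by
  set ε := min β (γ / 2) / (|σ| + 1)
  have hε : 0 < ε := by positivity
  have hσε : |σ| * ε ≤ min β (γ / 2) := by
    rw [mul_div_assoc', div_le_iff₀ (by positivity)]
    nlinarith [abs_nonneg σ, lt_min hβ (half_pos hγ)]
  have hσεβ : 0 ≤ β - |σ| * ε := by linarith [min_le_left β (γ / 2)]
  have hσεγ : 2 * (|σ| * ε) ≤ γ := by linarith [min_le_right β (γ / 2)]
  obtain ⟨C, hC⟩ := hωo.exists_norm_le_add_mul_norm hω hε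
  simp only [Real.norm_eq_abs, id] at hC
  refine ⟨2 * |σ| * C, fun τ t ht => ?_⟩
  have hshift : |t + τ| ≤ t + |τ| := (abs_add_le t τ).trans_eq (by rw [abs_of_nonneg ht])
  calc -β * t + σ * (ω (t + τ) - ω τ)
      ≤ -β * t + |σ| * (|ω (t + τ)| + |ω τ|) := by
        have := (le_abs_self _).trans_eq (abs_mul σ (ω (t + τ) - ω τ))
        have := abs_sub (ω (t + τ)) (ω τ)
        nlinarith [abs_nonneg σ]
    _ ≤ -β * t + |σ| * ((C + ε * (t + |τ|)) + (C + ε * |τ|)) := by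
        gcongr
        · exact (hC _).trans (by gcongr)
        · exact hC τ
    _ = -(β - |σ| * ε) * t + 2 * (|σ| * ε) * |τ| + 2 * |σ| * C := by ring
    _ ≤ γ * |τ| + 2 * |σ| * C := by
        nlinarith [mul_nonneg hσεβ ht, mul_le_mul_of_nonneg_right hσεγ (abs_nonneg τ)]

theorem geometric_sup_tempered_general (l σ : ℝ) (hl : 0 < l)
    (ω : ℝ → ℝ) (hωcont : Continuous ω)
    (hωtop : Filter.Tendsto (fun t : ℝ => ω t / t) Filter.atTop (nhds 0))
    (hωbot : Filter.Tendsto (fun t : ℝ => ω t / t) Filter.atBot (nhds 0)) :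
    (∀ τ : ℝ, BddAbove (Set.range fun t : Set.Ici (0 : ℝ) =>
        Real.exp (-(l + σ ^ 2 / 2) * (t : ℝ) + σ * (ω ((t : ℝ) + τ) - ω τ)))) ∧
    (∀ γ : ℝ, 0 < γ →
      BddAbove (Set.range fun τ : ℝ => Real.exp (-γ * |τ|) *
        ⨆ t : Set.Ici (0 : ℝ),
          Real.exp (-(l + σ ^ 2 / 2) * (t : ℝ) + σ * (ω ((t : ℝ) + τ) - ω τ)))) := by
  have hβ : 0 < l + σ ^ 2 / 2 := by positivity
  have hωo := isLittleO_cocompact_id_of_tendsto_div hωtop hωbot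
  refine ⟨fun τ => ?_, fun γ hγ => ?_⟩
  · obtain ⟨C, hC⟩ := exists_shifted_exponent_le (σ := σ) hβ one_pos hωcont hωo
    refine ⟨exp (1 * |τ| + C), ?_⟩
    rintro _ ⟨t, rfl⟩
    exact exp_le_exp.mpr (hC τ t t.2)
  · obtain ⟨C, hC⟩ := exists_shifted_exponent_le (σ := σ) hβ hγ hωcont hωo
    refine ⟨exp C, ?_⟩
    rintro _ ⟨τ, rfl⟩
    have hsup : ⨆ t : Set.Ici (0 : ℝ),
        exp (-(l + σ ^ 2 / 2) * (t : ℝ) + σ * (ω ((t : ℝ) + τ) - ω τ)) ≤ exp (γ * |τ| + C) :=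
      ciSup_le fun t => exp_le_exp.mpr (hC τ t t.2)
    calc exp (-γ * |τ|) * _ ≤ exp (-γ * |τ|) * exp (γ * |τ| + C) := by gcongr
      _ = exp C := by rw [← exp_add]; ring_nf

/-- Let `λ > 0`, `σ ∈ ℝ` and let `ω : ℝ → ℝ` be a continuous path with
`ω 0 = 0` and `ω(t)/t → 0` as `t → ±∞`. Then
`R(θ_τ ω) = sup_{t ≥ 0} exp(-(λ + σ²/2)t + σ(ω(t+τ) - ω(τ)))` is finite for
each `τ`, and for every `γ > 0` the family `e^{-γ|τ|} R(θ_τ ω)`, `τ ∈ ℝ`, is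
bounded above: `R` is tempered along this trajectory. -/
theorem geometric_sup_tempered (l σ : ℝ) (hl : 0 < l)
    (ω : ℝ → ℝ) (hωcont : Continuous ω) (hω0 : ω 0 = 0)
    (hωtop : Filter.Tendsto (fun t : ℝ => ω t / t) Filter.atTop (nhds 0))
    (hωbot : Filter.Tendsto (fun t : ℝ => ω t / t) Filter.atBot (nhds 0)) :
    (∀ τ : ℝ, BddAbove (Set.range fun t : Set.Ici (0 : ℝ) =>
        Real.exp (-(l + σ ^ 2 / 2) * (t : ℝ) + σ * (ω ((t : ℝ) + τ) - ω τ)))) ∧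
    (∀ γ : ℝ, 0 < γ →
      BddAbove (Set.range fun τ : ℝ => Real.exp (-γ * |τ|) *
        ⨆ t : Set.Ici (0 : ℝ),
          Real.exp (-(l + σ ^ 2 / 2) * (t : ℝ) + σ * (ω ((t : ℝ) + τ) - ω τ)))) :=
  geometric_sup_tempered_general l σ hl ω hωcont hωtop hωbot
end

section
/- Let V be a normed vector space, V₊ ⊆ V a solid normal cone, and let (x_α)_{α∈Λ} be a net in V converging to x_∞ ∈ V. Suppose that for each α the infimum x_α⁻ = inf{x_{α'} : α' ≥ α} and the supremum x_α⁺ = sup{x_{α'} : α' ≥ α} exist (with respect to the partial order induced by V₊). Then the nets (x_α⁻) and (x_α⁺) also converge to x_∞. -/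
/-!
An interior point `e` of the cone is an order unit with a norm control: a whole ball of radius
`t r` around `t • e` lies in the cone, so once the tail of the net is within `t r` of `xlim` it is
squeezed into the order interval `[xlim - t • e, xlim + t • e]`. The tail infimum lies in the same
interval (it dominates the lower bound and is dominated by `x α`), and normality turns this into
`‖xm α - xlim‖ ≤ (2c + 1) t ‖e‖`. Suprema reduce to infima through the order-reversing map `x ↦ -x`.
-/

open Filter Topology

theorem tendsto_of_forall_pos_eventually_norm_sub_le {ι E : Type*} [SeminormedAddCommGroup E]
    {l : Filter ι} {f : ι → E} {a : E} (C : ℝ) (h : ∀ t > 0, ∀ᶠ i in l, ‖f i - a‖ ≤ t * C) :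
    Tendsto f l (𝓝 a) := by
  refine Metric.tendsto_nhds.2 fun ε hε => ?_
  have hpos : 0 < |C| + 1 := by positivity
  filter_upwards [h (ε / (|C| + 1)) (div_pos hε hpos)] with i hi
  rw [dist_eq_norm]
  calc ‖f i - a‖ ≤ ε / (|C| + 1) * C := hi
    _ ≤ ε / (|C| + 1) * |C| := by gcongr; exact le_abs_self C
    _ < ε / (|C| + 1) * (|C| + 1) := by gcongr; linarith
    _ = ε := div_mul_cancel₀ ε hpos.ne'

section Cone

variable {V : Type*} [NormedAddCommGroup V] [NormedSpace ℝ V] {K : Set V}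

theorem Convex.add_mem_of_smul_mem (hconv : Convex ℝ K)
    (hsmul : ∀ a : ℝ, 0 ≤ a → ∀ x ∈ K, a • x ∈ K) {a b : V} (ha : a ∈ K) (hb : b ∈ K) :
    a + b ∈ K := by
  have hmid : (1 / 2 : ℝ) • a + (1 / 2 : ℝ) • b ∈ K :=
    hconv ha hb (by norm_num) (by norm_num) (by norm_num)
  simpa [smul_add, smul_smul] using hsmul 2 zero_le_two _ hmid

theorem exists_smul_add_mem_of_mem_interior (hsmul : ∀ a : ℝ, 0 ≤ a → ∀ x ∈ K, a • x ∈ K)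
    {e : V} (he : e ∈ interior K) :
    ∃ r > 0, ∀ t > 0, ∀ z : V, ‖z‖ < t * r → t • e + z ∈ K := by
  obtain ⟨r, hr, hball⟩ := Metric.mem_nhds_iff.mp (mem_interior_iff_mem_nhds.mp he)
  refine ⟨r, hr, fun t ht z hz => ?_⟩
  have hmem : e + t⁻¹ • z ∈ K := hball <| by
    rw [Metric.mem_ball, dist_eq_norm, add_sub_cancel_left, norm_smul, norm_inv,
      Real.norm_of_nonneg ht.le, inv_mul_lt_iff₀ ht]
    exact hz
  simpa [smul_add, smul_smul, ht.ne'] using hsmul t ht.le _ hmem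

theorem norm_sub_le_of_mem_cone_interval {c : ℝ}
    (hnormal : ∀ x y : V, x ∈ K → y - x ∈ K → ‖x‖ ≤ c * ‖y‖) {a e y : V} {t : ℝ} (ht : 0 ≤ t)
    (hlo : y - (a - t • e) ∈ K) (hhi : a + t • e - y ∈ K) :
    ‖y - a‖ ≤ t * ((2 * c + 1) * ‖e‖) := by
  have hwidth : ‖y - (a - t • e)‖ ≤ c * ‖(2 * t) • e‖ :=
    hnormal _ _ hlo (by convert hhi using 1; rw [two_mul, add_smul]; abel)
  rw [norm_smul, Real.norm_of_nonneg (by positivity)] at hwidth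
  calc ‖y - a‖ = ‖(y - (a - t • e)) - t • e‖ := by congr 1; abel
    _ ≤ ‖y - (a - t • e)‖ + ‖t • e‖ := norm_sub_le _ _
    _ ≤ c * (2 * t * ‖e‖) + t * ‖e‖ := by
        rw [norm_smul, Real.norm_of_nonneg ht]; linarith
    _ = t * ((2 * c + 1) * ‖e‖) := by ring

theorem tendsto_of_isGLB_tail_of_cone (hconv : Convex ℝ K)
    (hsmul : ∀ a : ℝ, 0 ≤ a → ∀ x ∈ K, a • x ∈ K)
    (hsolid : (interior K).Nonempty) {c : ℝ}
    (hnormal : ∀ x y : V, x ∈ K → y - x ∈ K → ‖x‖ ≤ c * ‖y‖)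
    {Λ : Type*} [Preorder Λ] {x : Λ → V} {xlim : V} (hx : Tendsto x atTop (𝓝 xlim))
    {xm : Λ → V} (hxm_le : ∀ α, x α - xm α ∈ K)
    (hxm_glb : ∀ α w, (∀ α', α ≤ α' → x α' - w ∈ K) → xm α - w ∈ K) :
    Tendsto xm atTop (𝓝 xlim) := by
  obtain ⟨e, he⟩ := hsolid
  obtain ⟨r, hr, hball⟩ := exists_smul_add_mem_of_mem_interior hsmul he
  refine tendsto_of_forall_pos_eventually_norm_sub_le ((2 * c + 1) * ‖e‖) fun t ht => ?_
  have hclose : ∀ᶠ α in atTop, ∀ α', α ≤ α' → ‖x α' - xlim‖ < t * r :=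
    eventually_forall_ge_atTop.2 <|
      (tendsto_iff_norm_sub_tendsto_zero.1 hx).eventually (gt_mem_nhds (mul_pos ht hr))
  filter_upwards [hclose] with α hα
  have hlo : xm α - (xlim - t • e) ∈ K := hxm_glb α _ fun α' hα' => by
    convert hball t ht _ (hα α' hα') using 1; abel
  have hhi : xlim + t • e - xm α ∈ K := by
    have hxα : xlim + t • e - x α ∈ K := by
      convert hball t ht (xlim - x α) (by rw [norm_sub_rev]; exact hα α le_rfl) using 1; abel
    simpa using hconv.add_mem_of_smul_mem hsmul hxα (hxm_le α)
  exact norm_sub_le_of_mem_cone_interval hnormal ht.le hlo hhi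
end Cone

theorem net_tail_inf_sup_tendsto_general
    {V : Type*} [NormedAddCommGroup V] [NormedSpace ℝ V]
    (K : Set V) (hconv : Convex ℝ K)
    (hsmul : ∀ a : ℝ, 0 ≤ a → ∀ x ∈ K, a • x ∈ K)
    (hsolid : (interior K).Nonempty)
    (c : ℝ)
    (hnormal : ∀ x y : V, x ∈ K → y - x ∈ K → ‖x‖ ≤ c * ‖y‖)
    -- the order induced by the cone
    (le : V → V → Prop) (hle : ∀ x y : V, le x y ↔ y - x ∈ K)
    {Λ : Type*} [SemilatticeSup Λ]
    (x : Λ → V) (xlim : V)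
    (hx : Filter.Tendsto x Filter.atTop (nhds xlim))
    (xm xp : Λ → V)
    (hxm : ∀ α : Λ, (∀ α' : Λ, α ≤ α' → le (xm α) (x α')) ∧
      ∀ w : V, (∀ α' : Λ, α ≤ α' → le w (x α')) → le w (xm α))
    (hxp : ∀ α : Λ, (∀ α' : Λ, α ≤ α' → le (x α') (xp α)) ∧
      ∀ w : V, (∀ α' : Λ, α ≤ α' → le (x α') w) → le (xp α) w) :
    Filter.Tendsto xm Filter.atTop (nhds xlim) ∧
    Filter.Tendsto xp Filter.atTop (nhds xlim) := by
  constructor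
  · exact tendsto_of_isGLB_tail_of_cone hconv hsmul hsolid hnormal hx
      (fun α => (hle _ _).1 ((hxm α).1 α le_rfl))
      (fun α w hw => (hle _ _).1 ((hxm α).2 w fun α' hα' => (hle _ _).2 (hw α' hα')))
  · have hneg := tendsto_of_isGLB_tail_of_cone hconv hsmul hsolid hnormal hx.neg
      (xm := fun α => -xp α)
      (fun α => by simpa [sub_eq_add_neg, add_comm] using (hle _ _).1 ((hxp α).1 α le_rfl))
      (fun α w hw => by
        have := (hle _ _).1 <| (hxp α).2 (-w) fun α' hα' => (hle _ _).2 <| by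
          simpa [sub_eq_add_neg, add_comm] using hw α' hα'
        simpa [sub_eq_add_neg, add_comm] using this)
    simpa using hneg.neg

/-- Let `V` be a normed space with a solid normal cone `K`, inducing the order
`x ≤ y ↔ y - x ∈ K`. If a net `(x_α)` (indexed by a directed set `Λ`) converges
to `xlim` and for each `α` the tail infimum `xm α` and tail supremum `xp α` exist
in this order, then the nets `(xm α)` and `(xp α)` also converge to `xlim`. -/
theorem net_tail_inf_sup_tendsto
    {V : Type*} [NormedAddCommGroup V] [NormedSpace ℝ V]
    (K : Set V) (hclosed : IsClosed K) (hconv : Convex ℝ K)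
    (hsmul : ∀ a : ℝ, 0 ≤ a → ∀ x ∈ K, a • x ∈ K)
    (hpoint : ∀ x : V, x ∈ K → -x ∈ K → x = 0)
    (hsolid : (interior K).Nonempty)
    (c : ℝ) (hc : 0 < c)
    (hnormal : ∀ x y : V, x ∈ K → y - x ∈ K → ‖x‖ ≤ c * ‖y‖)
    -- the order induced by the cone
    (le : V → V → Prop) (hle : ∀ x y : V, le x y ↔ y - x ∈ K)
    {Λ : Type*} [Nonempty Λ] [SemilatticeSup Λ]
    (x : Λ → V) (xlim : V)
    (hx : Filter.Tendsto x Filter.atTop (nhds xlim))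
    (xm xp : Λ → V)
    (hxm : ∀ α : Λ, (∀ α' : Λ, α ≤ α' → le (xm α) (x α')) ∧
      ∀ w : V, (∀ α' : Λ, α ≤ α' → le w (x α')) → le w (xm α))
    (hxp : ∀ α : Λ, (∀ α' : Λ, α ≤ α' → le (x α') (xp α)) ∧
      ∀ w : V, (∀ α' : Λ, α ≤ α' → le (x α') w) → le (xp α) w) :
    Filter.Tendsto xm Filter.atTop (nhds xlim) ∧
    Filter.Tendsto xp Filter.atTop (nhds xlim) :=
  net_tail_inf_sup_tendsto_general K hconv hsmul hsolid c hnormal le hle x xlim hx xm xp hxm hxp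
end

section
/- Let V be a normed space with normal cone V₊ in which the norm is monotone (0 ≤ x ≤ y ⟹ ‖x‖ ≤ ‖y‖). Then for any x, y in the same part C of V₊, ‖x − y‖ ≤ (2e^{p(x,y)} − e^{−p(x,y)} − 1) · min{‖x‖, ‖y‖}, where p is the part metric on C. Consequently, if p(x_k, u) → 0 then ‖x_k − u‖ → 0. -/
/-!
If `c⁻¹ x ≤ y ≤ c x` with `c ≥ 1`, then `0 ≤ y - c⁻¹ x ≤ (c - c⁻¹) x`, so monotonicity of the norm
gives `‖y - c⁻¹ x‖ ≤ (c - c⁻¹)‖x‖`, and the triangle inequality through `c⁻¹ x` yields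
`‖x - y‖ ≤ (c + 1 - 2c⁻¹)‖x‖ ≤ (2c - c⁻¹ - 1)‖x‖`, the last step being `c + c⁻¹ ≥ 2`.
The comparison is symmetric in `x, y`, so `‖x‖` may be replaced by `min ‖x‖ ‖y‖`;
the bound is monotone and continuous in `log c`, so it passes to the infimum `p x y`.
-/

open Filter Real

noncomputable def partNormFactor (t : ℝ) : ℝ := 2 * exp t - exp (-t) - 1

lemma partNormFactor_zero : partNormFactor 0 = 0 := by
  norm_num [partNormFactor]

lemma monotone_partNormFactor : Monotone partNormFactor := by
  intro s t hst
  have hexp : exp s ≤ exp t := exp_le_exp.mpr hst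
  have hexp_neg : exp (-t) ≤ exp (-s) := exp_le_exp.mpr (neg_le_neg hst)
  unfold partNormFactor
  linarith

lemma continuous_partNormFactor : Continuous partNormFactor := by
  unfold partNormFactor
  fun_prop

lemma partNormFactor_nonneg {t : ℝ} (ht : 0 ≤ t) : 0 ≤ partNormFactor t :=
  partNormFactor_zero ▸ monotone_partNormFactor ht

lemma partNormFactor_log {c : ℝ} (hc : 0 < c) : partNormFactor (log c) = 2 * c - c⁻¹ - 1 := by
  rw [partNormFactor, exp_neg, exp_log hc]

lemma le_partNormFactor_sInf_mul {S : Set ℝ} (hne : S.Nonempty) (hS : ∀ r ∈ S, 0 ≤ r)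
    {a m : ℝ} (hm : 0 ≤ m) (h : ∀ r ∈ S, a ≤ partNormFactor r * m) :
    a ≤ partNormFactor (sInf S) * m := by
  have hmono : Monotone fun r => partNormFactor r * m :=
    monotone_partNormFactor.mul_const hm
  have hcont : Continuous fun r => partNormFactor r * m :=
    continuous_partNormFactor.mul continuous_const
  rw [hmono.map_csInf_of_continuousAt hcont.continuousAt hne ⟨0, hS⟩]
  exact le_csInf (hne.image _) (Set.forall_mem_image.mpr h)

section Cone

variable {V : Type*} [NormedAddCommGroup V] [NormedSpace ℝ V] {K : Set V}

lemma inv_smul_le_and_le_smul_swap (hsmul : ∀ a : ℝ, 0 ≤ a → ∀ x ∈ K, a • x ∈ K)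
    {c : ℝ} (hc : 0 < c) {x y : V} (hlow : y - c⁻¹ • x ∈ K) (hup : c • x - y ∈ K) :
    x - c⁻¹ • y ∈ K ∧ c • y - x ∈ K := by
  constructor
  · convert hsmul c⁻¹ (inv_nonneg.mpr hc.le) _ hup using 1
    rw [smul_sub, inv_smul_smul₀ hc.ne']
  · convert hsmul c hc.le _ hlow using 1
    rw [smul_sub, smul_inv_smul₀ hc.ne']

lemma norm_sub_le_of_inv_smul_le_of_le_smul
    (hmononorm : ∀ x y : V, x ∈ K → y - x ∈ K → ‖x‖ ≤ ‖y‖)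
    {c : ℝ} (hc : 1 ≤ c) {x y : V} (hlow : y - c⁻¹ • x ∈ K) (hup : c • x - y ∈ K) :
    ‖x - y‖ ≤ (2 * c - c⁻¹ - 1) * ‖x‖ := by
  have hcinv : c⁻¹ ≤ 1 := inv_le_one_of_one_le₀ hc
  have hcinv_le : c⁻¹ ≤ c := hcinv.trans hc
  have hgap : ‖y - c⁻¹ • x‖ ≤ (c - c⁻¹) * ‖x‖ := by
    have h := hmononorm _ ((c - c⁻¹) • x) hlow (by convert hup using 1; rw [sub_smul]; abel)
    rwa [norm_smul, Real.norm_of_nonneg (sub_nonneg.mpr hcinv_le)] at h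
  have hshrink : ‖x - c⁻¹ • x‖ = (1 - c⁻¹) * ‖x‖ := by
    rw [show x - c⁻¹ • x = (1 - c⁻¹) • x by rw [sub_smul, one_smul], norm_smul,
      Real.norm_of_nonneg (sub_nonneg.mpr hcinv)]
  calc ‖x - y‖ = ‖(x - c⁻¹ • x) - (y - c⁻¹ • x)‖ := by rw [sub_sub_sub_cancel_right]
    _ ≤ ‖x - c⁻¹ • x‖ + ‖y - c⁻¹ • x‖ := norm_sub_le _ _
    _ ≤ (1 - c⁻¹) * ‖x‖ + (c - c⁻¹) * ‖x‖ := by rw [hshrink]; gcongr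
    _ ≤ (2 * c - c⁻¹ - 1) * ‖x‖ := by
      have hcc : c * c⁻¹ = 1 := mul_inv_cancel₀ (one_pos.trans_le hc).ne'
      nlinarith [norm_nonneg x, sq_nonneg (c - 1), inv_pos.mpr (one_pos.trans_le hc)]

lemma norm_sub_le_partNormFactor_log_mul_min
    (hsmul : ∀ a : ℝ, 0 ≤ a → ∀ x ∈ K, a • x ∈ K)
    (hmononorm : ∀ x y : V, x ∈ K → y - x ∈ K → ‖x‖ ≤ ‖y‖)
    {c : ℝ} (hc : 1 ≤ c) {x y : V} (hlow : y - c⁻¹ • x ∈ K) (hup : c • x - y ∈ K) :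
    ‖x - y‖ ≤ partNormFactor (log c) * min ‖x‖ ‖y‖ := by
  have hc₀ : 0 < c := one_pos.trans_le hc
  obtain ⟨hlow', hup'⟩ := inv_smul_le_and_le_smul_swap hsmul hc₀ hlow hup
  rw [partNormFactor_log hc₀]
  rcases min_choice ‖x‖ ‖y‖ with h | h <;> rw [h]
  · exact norm_sub_le_of_inv_smul_le_of_le_smul hmononorm hc hlow hup
  · rw [norm_sub_rev]
    exact norm_sub_le_of_inv_smul_le_of_le_smul hmononorm hc hlow' hup'

end Cone

theorem norm_le_part_metric_bound_general
    {V : Type*} [NormedAddCommGroup V] [NormedSpace ℝ V]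
    (K : Set V)
    (hsmul : ∀ a : ℝ, 0 ≤ a → ∀ x ∈ K, a • x ∈ K)
    (hmononorm : ∀ x y : V, x ∈ K → y - x ∈ K → ‖x‖ ≤ ‖y‖)
    -- `C` is a part of the cone `K`
    (C : Set V)
    (hCpart : ∀ x ∈ C, ∀ y ∈ C,
      ∃ c : ℝ, 1 ≤ c ∧ y - c⁻¹ • x ∈ K ∧ c • x - y ∈ K)
    (p : V → V → ℝ)
    (hp : ∀ x y : V, p x y =
      sInf {r : ℝ | ∃ c : ℝ, 1 ≤ c ∧ y - c⁻¹ • x ∈ K ∧ c • x - y ∈ K ∧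
        r = Real.log c}) :
    (∀ x ∈ C, ∀ y ∈ C,
      ‖x - y‖ ≤ (2 * Real.exp (p x y) - Real.exp (-(p x y)) - 1) *
        min ‖x‖ ‖y‖) ∧
    (∀ u ∈ C, ∀ x : ℕ → V, (∀ k, x k ∈ C) →
      Tendsto (fun k => p (x k) u) atTop (nhds 0) →
      Tendsto (fun k => ‖x k - u‖) atTop (nhds 0)) := by
  have log_nonneg_of_admissible : ∀ x y : V, ∀ r ∈ {r : ℝ | ∃ c : ℝ, 1 ≤ c ∧
      y - c⁻¹ • x ∈ K ∧ c • x - y ∈ K ∧ r = Real.log c}, 0 ≤ r := by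
    rintro x y _ ⟨c, hc, -, -, rfl⟩
    exact log_nonneg hc
  have bound : ∀ x ∈ C, ∀ y ∈ C, ‖x - y‖ ≤ partNormFactor (p x y) * min ‖x‖ ‖y‖ := by
    intro x hx y hy
    obtain ⟨c, hc, hlow, hup⟩ := hCpart x hx y hy
    rw [hp]
    refine le_partNormFactor_sInf_mul ?_ (log_nonneg_of_admissible x y) (by positivity) ?_
    · exact ⟨log c, c, hc, hlow, hup, rfl⟩
    rintro _ ⟨c, hc, hlow, hup, rfl⟩
    exact norm_sub_le_partNormFactor_log_mul_min hsmul hmononorm hc hlow hup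
  refine ⟨bound, fun u hu x hxC hlim => ?_⟩
  have hdominated : ∀ k, ‖x k - u‖ ≤ partNormFactor (p (x k) u) * ‖u‖ := by
    intro k
    have hp_nonneg : 0 ≤ p (x k) u := by
      rw [hp]
      exact Real.sInf_nonneg (log_nonneg_of_admissible _ _)
    exact (bound _ (hxC k) u hu).trans <|
      mul_le_mul_of_nonneg_left (min_le_right _ _) (partNormFactor_nonneg hp_nonneg)
  refine squeeze_zero (fun _ => norm_nonneg _) hdominated ?_
  simpa [partNormFactor_zero] using
    ((continuous_partNormFactor.tendsto 0).comp hlim).mul_const ‖u‖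

/-- In a normed space with a normal cone `K` for which the norm is monotone
(`0 ≤ x ≤ y ⟹ ‖x‖ ≤ ‖y‖`), any two points `x, y` of the same part `C` satisfy
`‖x - y‖ ≤ (2e^{p(x,y)} - e^{-p(x,y)} - 1)·min(‖x‖, ‖y‖)`, where `p` is the
part metric.  Consequently convergence in the part metric implies norm
convergence. -/
theorem norm_le_part_metric_bound
    {V : Type*} [NormedAddCommGroup V] [NormedSpace ℝ V]
    (K : Set V) (hclosed : IsClosed K) (hconv : Convex ℝ K)
    (hsmul : ∀ a : ℝ, 0 ≤ a → ∀ x ∈ K, a • x ∈ K)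
    (hpoint : ∀ x : V, x ∈ K → -x ∈ K → x = 0)
    (hmononorm : ∀ x y : V, x ∈ K → y - x ∈ K → ‖x‖ ≤ ‖y‖)
    -- `C` is a part of the cone `K`
    (C : Set V) (hCK : C ⊆ K)
    (hCpart : ∀ x ∈ C, ∀ y ∈ C,
      ∃ c : ℝ, 1 ≤ c ∧ y - c⁻¹ • x ∈ K ∧ c • x - y ∈ K)
    (p : V → V → ℝ)
    (hp : ∀ x y : V, p x y =
      sInf {r : ℝ | ∃ c : ℝ, 1 ≤ c ∧ y - c⁻¹ • x ∈ K ∧ c • x - y ∈ K ∧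
        r = Real.log c}) :
    (∀ x ∈ C, ∀ y ∈ C,
      ‖x - y‖ ≤ (2 * Real.exp (p x y) - Real.exp (-(p x y)) - 1) *
        min ‖x‖ ‖y‖) ∧
    (∀ u ∈ C, ∀ x : ℕ → V, (∀ k, x k ∈ C) →
      Tendsto (fun k => p (x k) u) atTop (nhds 0) →
      Tendsto (fun k => ‖x k - u‖) atTop (nhds 0)) :=
  norm_le_part_metric_bound_general K hsmul hmononorm C hCpart p hp
end
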